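/- arXiv:2402.09695 — 2 statements merged into one kernel-verified Lean document; each statement's English description precedes it below -/
import Mathlib

section
/- (The policy contrast attack makes good policies look bad.) Let R̂ be the PCA adversarial reward function. If π₂ ∈ Π₂ is a good policy whose actions are separated from the bad policy's actions, i.e., dist(π₂(s), π₁(s)) > d at every state s ∈ S, then its performance under the adversarial reward is J_{R̂}(π₂) = −Δ₂/(1−γ). -/
/-- The trajectory of a deterministic policy `π` in a deterministic MDP with
transition function `P`, starting from `s0`. -/
def traj {S A : Type*} (P : S → A → S) (π : S → A) (s0 : S) : ℕ → S
  | 0 => s0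
  | t + 1 => P (traj P π s0 t) (π (traj P π s0 t))

/-- The performance `J_{R}(π)` of a deterministic policy `π`: the discounted
cumulative reward along its trajectory. -/
noncomputable def perf {S A : Type*} (P : S → A → S) (s0 : S) (γ : ℝ)
    (R : S → A → ℝ) (π : S → A) : ℝ :=
  ∑' t : ℕ, γ ^ t * R (traj P π s0 t) (π (traj P π s0 t))

open Classical in
/-- The PCA (policy contrast attack) adversarial reward function, built from the
true reward `R`, the bad policy `π₁`, the good policy set `Pi₂`, the distance
threshold `d`, and the corruption parameters `Δ₁`, `Δ₂`. -/
noncomputable def pcaReward {S A : Type*} [MetricSpace A] (R : S → A → ℝ)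
    (π₁ : S → A) (Pi₂ : Finset (S → A)) (d Δ₁ Δ₂ : ℝ) (s : S) (a : A) : ℝ :=
  if dist a (π₁ s) ≤ d then R s a + Δ₁ * (1 - dist a (π₁ s) / d)
  else if ∃ π₂ ∈ Pi₂, dist a (π₂ s) ≤ d then -Δ₂
  else R s a

/-- the policy contrast attack makes good policies look bad: if a
good policy `π₂ ∈ Pi₂` keeps distance more than `d` from the bad policy's action at
every state, then its adversarial performance is `J_{R̂}(π₂) = -Δ₂ / (1 - γ)`. -/
theorem stmt_15 {S A : Type*} [MetricSpace A] (P : S → A → S) (s0 : S)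
    (R : S → A → ℝ) (M : ℝ) (hR : ∀ s a, |R s a| ≤ M)
    (γ : ℝ) (hγ0 : 0 ≤ γ) (hγ1 : γ < 1)
    (π₁ : S → A) (Pi₂ : Finset (S → A)) (d Δ₁ Δ₂ : ℝ)
    (hd : 0 < d) (hΔ₁ : 0 ≤ Δ₁) (hΔ₂ : 0 ≤ Δ₂)
    (π₂ : S → A) (hπ₂ : π₂ ∈ Pi₂)
    (hfar : ∀ s : S, d < dist (π₂ s) (π₁ s)) :
    perf P s0 γ (pcaReward R π₁ Pi₂ d Δ₁ Δ₂) π₂ = -Δ₂ / (1 - γ) := by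
  have hstep : ∀ s : S, pcaReward R π₁ Pi₂ d Δ₁ Δ₂ s (π₂ s) = -Δ₂ := by
    intro s
    unfold pcaReward
    rw [if_neg (not_le.mpr (hfar s)), if_pos ⟨π₂, hπ₂, by simp [hd.le]⟩]
  unfold perf
  simp only [hstep]
  rw [tsum_mul_right, tsum_geometric_of_lt_one hγ0 hγ1]
  field_simp
end

section
/- (Policy contrast inequality.) Let R̂ be the PCA adversarial reward function, and suppose that every good policy π₂ ∈ Π₂ satisfies dist(π₂(s), π₁(s)) > d at every state s ∈ S. If the corruption parameters satisfy Δ₁ + Δ₂ > M + (1−γ)·δ for some δ ≥ 0, then the bad policy strictly outperforms every good policy under the adversarial reward with margin δ: J_{R̂}(π₁) > J_{R̂}(π₂) + δ for every π₂ ∈ Π₂. -/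
/-!
Along its own trajectory the bad policy collects `R + Δ₁ ≥ Δ₁ - M` at every step, while a good
policy, being more than `d` away from `π₁` yet within `d` of itself, collects exactly `-Δ₂`.
Summing the geometric series, `J(π₁) - J(π₂) ≥ (Δ₁ + Δ₂ - M) / (1 - γ) > δ`.
-/

section Performance

variable {S A : Type*} (P : S → A → S) (s0 : S) {γ : ℝ} (R : S → A → ℝ) (π : S → A)

theorem summable_perf_of_abs_le (hγ0 : 0 ≤ γ) (hγ1 : γ < 1) {B : ℝ}
    (hB : ∀ s, |R s (π s)| ≤ B) :
    Summable fun t => γ ^ t * R (traj P π s0 t) (π (traj P π s0 t)) :=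
  ((summable_geometric_of_lt_one hγ0 hγ1).mul_right B).of_norm_bounded fun t => by
    rw [norm_mul, norm_pow, Real.norm_eq_abs, Real.norm_eq_abs, abs_of_nonneg hγ0]
    exact mul_le_mul_of_nonneg_left (hB _) (by positivity)

theorem perf_eq_of_forall_eq (hγ : |γ| < 1) {c : ℝ} (hc : ∀ s, R s (π s) = c) :
    perf P s0 γ R π = c / (1 - γ) := by
  simp only [perf, hc]
  rw [tsum_mul_right, tsum_geometric_of_abs_lt_one hγ, div_eq_mul_inv, mul_comm]

theorem div_one_sub_le_perf (hγ0 : 0 ≤ γ) (hγ1 : γ < 1) {B c : ℝ}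
    (hB : ∀ s, |R s (π s)| ≤ B) (hc : ∀ s, c ≤ R s (π s)) :
    c / (1 - γ) ≤ perf P s0 γ R π := by
  calc c / (1 - γ) = ∑' t : ℕ, γ ^ t * c := by
        rw [tsum_mul_right, tsum_geometric_of_lt_one hγ0 hγ1, div_eq_mul_inv, mul_comm]
    _ ≤ perf P s0 γ R π :=
        ((summable_geometric_of_lt_one hγ0 hγ1).mul_right c).tsum_le_tsum
          (fun t => mul_le_mul_of_nonneg_left (hc _) (pow_nonneg hγ0 t))
          (summable_perf_of_abs_le P s0 R π hγ0 hγ1 hB)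

end Performance

section PCAReward

variable {S A : Type*} [MetricSpace A] (R : S → A → ℝ) (π₁ : S → A) (Pi₂ : Finset (S → A))
  {d : ℝ} (Δ₁ Δ₂ : ℝ)

theorem pcaReward_bad_policy (hd : 0 ≤ d) (s : S) :
    pcaReward R π₁ Pi₂ d Δ₁ Δ₂ s (π₁ s) = R s (π₁ s) + Δ₁ := by
  simp [pcaReward, hd]

theorem pcaReward_good_policy_of_far {π₂ : S → A} (hπ₂ : π₂ ∈ Pi₂) (hd : 0 ≤ d) {s : S}
    (hfar : d < dist (π₂ s) (π₁ s)) :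
    pcaReward R π₁ Pi₂ d Δ₁ Δ₂ s (π₂ s) = -Δ₂ := by
  have hnear : ∃ π ∈ Pi₂, dist (π₂ s) (π s) ≤ d := ⟨π₂, hπ₂, by simpa using hd⟩
  simp [pcaReward, not_le.2 hfar, hnear]

end PCAReward

theorem stmt_16_general {S A : Type*} [MetricSpace A] (P : S → A → S) (s0 : S)
    (R : S → A → ℝ) (M : ℝ) (hR : ∀ s a, |R s a| ≤ M)
    (γ : ℝ) (hγ0 : 0 ≤ γ) (hγ1 : γ < 1)
    (π₁ : S → A) (Pi₂ : Finset (S → A)) (d Δ₁ Δ₂ : ℝ)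
    (hd : 0 < d)
    (hfar : ∀ π₂ ∈ Pi₂, ∀ s : S, d < dist (π₂ s) (π₁ s))
    (δ : ℝ) (hbudget : M + (1 - γ) * δ < Δ₁ + Δ₂) :
    ∀ π₂ ∈ Pi₂, perf P s0 γ (pcaReward R π₁ Pi₂ d Δ₁ Δ₂) π₂ + δ <
      perf P s0 γ (pcaReward R π₁ Pi₂ d Δ₁ Δ₂) π₁ := by
  intro π₂ hπ₂
  set Rpca := pcaReward R π₁ Pi₂ d Δ₁ Δ₂
  have hRpca₁ : ∀ s, Rpca s (π₁ s) = R s (π₁ s) + Δ₁ := pcaReward_bad_policy R π₁ Pi₂ Δ₁ Δ₂ hd.le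
  have hJ₂ : perf P s0 γ Rpca π₂ = -Δ₂ / (1 - γ) :=
    perf_eq_of_forall_eq P s0 Rpca π₂ (abs_lt.2 ⟨by linarith, hγ1⟩) fun s =>
      pcaReward_good_policy_of_far R π₁ Pi₂ Δ₁ Δ₂ hπ₂ hd.le (hfar π₂ hπ₂ s)
  have hJ₁ : (Δ₁ - M) / (1 - γ) ≤ perf P s0 γ Rpca π₁ :=
    div_one_sub_le_perf P s0 Rpca π₁ hγ0 hγ1 (B := M + |Δ₁|)
      (fun s => hRpca₁ s ▸ (abs_add_le _ _).trans (by gcongr; exact hR _ _))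
      (fun s => hRpca₁ s ▸ by linarith [(abs_le.1 (hR s (π₁ s))).1])
  have hgap : -Δ₂ / (1 - γ) + δ < (Δ₁ - M) / (1 - γ) := by
    rw [div_add' _ _ _ (by linarith), div_lt_div_iff_of_pos_right (by linarith)]
    linarith
  linarith

/-- policy contrast inequality: if every good policy keeps distance
more than `d` from the bad policy's action at every state and the corruption
parameters satisfy `Δ₁ + Δ₂ > M + (1 - γ) * δ`, then the bad policy strictly
outperforms every good policy under the adversarial reward with margin `δ`. -/
theorem stmt_16 {S A : Type*} [MetricSpace A] (P : S → A → S) (s0 : S)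
    (R : S → A → ℝ) (M : ℝ) (hR : ∀ s a, |R s a| ≤ M)
    (γ : ℝ) (hγ0 : 0 ≤ γ) (hγ1 : γ < 1)
    (π₁ : S → A) (Pi₂ : Finset (S → A)) (d Δ₁ Δ₂ : ℝ)
    (hd : 0 < d) (hΔ₁ : 0 ≤ Δ₁) (hΔ₂ : 0 ≤ Δ₂)
    (hfar : ∀ π₂ ∈ Pi₂, ∀ s : S, d < dist (π₂ s) (π₁ s))
    (δ : ℝ) (hδ : 0 ≤ δ) (hbudget : M + (1 - γ) * δ < Δ₁ + Δ₂) :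
    ∀ π₂ ∈ Pi₂, perf P s0 γ (pcaReward R π₁ Pi₂ d Δ₁ Δ₂) π₂ + δ <
      perf P s0 γ (pcaReward R π₁ Pi₂ d Δ₁ Δ₂) π₁ :=
  stmt_16_general P s0 R M hR γ hγ0 hγ1 π₁ Pi₂ d Δ₁ Δ₂ hd hfar δ hbudget
end
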